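/- The pure braid group P_n of the disc on n strands is isomorphic to the pure braid group P_{n−1}(A) of the annulus on n−1 strands. -/

import Mathlib

open CategoryTheory

noncomputable section

/-- The (reduced) topological complexity of a space: the minimal `k` such that `X × X` admits
a cover by `k+1` open sets, on each of which the free path fibration admits a continuous
section. `⊤` if no such `k` exists. -/
def topologicalComplexity (X : Type) [TopologicalSpace X] : ℕ∞ :=
  sInf {N : ℕ∞ | ∃ k : ℕ, N = k ∧ ∃ U : Fin (k + 1) → Set (X × X),
    (∀ i, IsOpen (U i)) ∧ (∀ p : X × X, ∃ i, p ∈ U i) ∧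
    ∀ i, ∃ s : C(U i, C(unitInterval, X)),
      ∀ u : U i, s u 0 = u.1.1 ∧ s u 1 = u.1.2}

/-- The cohomological dimension of a discrete group: the supremum of the degrees in which
group cohomology with some coefficient module is non-trivial. -/
def cd (G : Type) [Group G] : ℕ∞ :=
  sSup {N : ℕ∞ | ∃ n : ℕ, N = n ∧ ∃ M : Rep ℤ G, Nontrivial (groupCohomology M n)}

/-- A space is aspherical if all its higher homotopy groups vanish. -/
def IsAspherical (X : Type) [TopologicalSpace X] : Prop :=
  ∀ n : ℕ, 2 ≤ n → ∀ x : X, Subsingleton (HomotopyGroup (Fin n) X x)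

/-- `X` is an Eilenberg–MacLane space `K(π,1)` for the group `π`. -/
def IsKPi1 (G : Type) [Group G] (X : Type) [TopologicalSpace X] (x : X) : Prop :=
  PathConnectedSpace X ∧ IsAspherical X ∧ Nonempty (FundamentalGroup X x ≃* G)

/-- The homomorphism of fundamental groups induced by a continuous map. -/
def π₁map {X Y : Type} [TopologicalSpace X] [TopologicalSpace Y] (f : C(X, Y)) (x : X) :
    FundamentalGroup X x →* FundamentalGroup Y (f x) :=
  Functor.mapEnd (⟨x⟩ : FundamentalGroupoid X) (FundamentalGroupoid.fundamentalGroupoidFunctor.map (TopCat.ofHom f : TopCat.of X ⟶ TopCat.of Y))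

/-- The ordered configuration space of `n` points in `X`. -/
def ConfSpace (X : Type) [TopologicalSpace X] (n : ℕ) : Type :=
  {f : Fin n → X // Function.Injective f}

instance (X : Type) [TopologicalSpace X] (n : ℕ) : TopologicalSpace (ConfSpace X n) :=
  inferInstanceAs (TopologicalSpace {f : Fin n → X // Function.Injective f})

/-- Two ordered configurations are equivalent if they differ by a permutation of the labels. -/
def confSetoid (X : Type) [TopologicalSpace X] (n : ℕ) : Setoid (ConfSpace X n) where
  r f g := ∃ σ : Equiv.Perm (Fin n), g.1 = f.1 ∘ σ
  iseqv := by
    constructor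
    · exact fun f => ⟨Equiv.refl _, rfl⟩
    · rintro f g ⟨σ, h⟩
      exact ⟨σ.symm, by funext i; simp [h]⟩
    · rintro f g h ⟨σ, hσ⟩ ⟨τ, hτ⟩
      exact ⟨τ.trans σ, by funext i; simp only [hτ, hσ]; rfl⟩

/-- The unordered configuration space of `n` points in `X`. -/
def UConfSpace (X : Type) [TopologicalSpace X] (n : ℕ) : Type :=
  Quotient (confSetoid X n)

instance (X : Type) [TopologicalSpace X] (n : ℕ) : TopologicalSpace (UConfSpace X n) :=
  inferInstanceAs (TopologicalSpace (Quotient (confSetoid X n)))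

/-- The covering projection from the ordered to the unordered configuration space. -/
def uconfQuot (X : Type) [TopologicalSpace X] (n : ℕ) : C(ConfSpace X n, UConfSpace X n) :=
  ⟨Quotient.mk (confSetoid X n), continuous_quotient_mk'⟩

/-- The map of ordered configuration spaces induced by an injective continuous map. -/
def confMap {X Y : Type} [TopologicalSpace X] [TopologicalSpace Y] (e : C(X, Y))
    (he : Function.Injective e) (n : ℕ) : C(ConfSpace X n, ConfSpace Y n) :=
  ⟨fun f => ⟨e ∘ f.1, he.comp f.2⟩, by
    apply Continuous.subtype_mk
    exact continuous_pi fun i =>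
      e.continuous.comp ((continuous_apply i).comp continuous_subtype_val)⟩

/-- The map of unordered configuration spaces induced by an injective continuous map. -/
def uconfMap {X Y : Type} [TopologicalSpace X] [TopologicalSpace Y] (e : C(X, Y))
    (he : Function.Injective e) (n : ℕ) : C(UConfSpace X n, UConfSpace Y n) :=
  ⟨Quotient.map (confMap e he n)
      (by rintro f g ⟨σ, h⟩; exact ⟨σ, by funext i; exact congrArg e (congrFun h i)⟩),
    ((continuous_quotient_mk').comp (confMap e he n).continuous).quotient_lift _⟩

/-- Forgetting the last point of a configuration (the Fadell–Neuwirth fibration). -/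
def confForget (X : Type) [TopologicalSpace X] (n : ℕ) :
    C(ConfSpace X (n + 1), ConfSpace X n) :=
  ⟨fun f => ⟨f.1 ∘ Fin.castSucc, f.2.comp (Fin.castSucc_injective n)⟩, by
    apply Continuous.subtype_mk
    exact continuous_pi fun i => (continuous_apply _).comp continuous_subtype_val⟩

/-- The inclusion of the fiber of the Fadell–Neuwirth fibration over `c`:
a point of `X` away from `c` is added as the last point of the configuration. -/
def fiberIncl {X : Type} [TopologicalSpace X] {n : ℕ} (c : ConfSpace X n) :
    C({x : X // x ∉ Set.range c.1}, ConfSpace X (n + 1)) :=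
  ⟨fun x => ⟨Fin.snoc c.1 x.1, by
      intro i j hij
      induction i using Fin.lastCases with
      | last =>
        induction j using Fin.lastCases with
        | last => rfl
        | cast j =>
          simp only [Fin.snoc_last, Fin.snoc_castSucc] at hij
          exact absurd ⟨j, hij.symm⟩ x.2
      | cast i =>
        induction j using Fin.lastCases with
        | last =>
          simp only [Fin.snoc_last, Fin.snoc_castSucc] at hij
          exact absurd ⟨i, hij⟩ x.2
        | cast j =>
          simp only [Fin.snoc_castSucc] at hij
          exact congrArg Fin.castSucc (c.2 hij)⟩, by
    apply Continuous.subtype_mk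
    apply continuous_pi
    intro j
    induction j using Fin.lastCases with
    | last => simpa [Fin.snoc_last] using continuous_subtype_val
    | cast j => simpa [Fin.snoc_castSucc] using continuous_const⟩

/-- The projection of the ordered configuration space onto the `k`-th strand. -/
def strandProj (X : Type) [TopologicalSpace X] (n : ℕ) (k : Fin n) : C(ConfSpace X n, X) :=
  ⟨fun f => f.1 k, (continuous_apply k).comp continuous_subtype_val⟩

/-- A closed surface: a compact connected Hausdorff space which is locally
homeomorphic to `ℝ²`. -/
structure IsClosedSurface (S : Type) [TopologicalSpace S] : Prop where
  connected : ConnectedSpace S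
  t2 : T2Space S
  compact : CompactSpace S
  secondCountable : SecondCountableTopology S
  locEuclidean : ∀ x : S, ∃ e : PartialHomeomorph S (ℝ × ℝ), x ∈ e.source

/-- A surface: a closed surface with a finite (possibly empty) set of points removed. -/
def IsSurface (S : Type) [TopologicalSpace S] : Prop :=
  ∃ (T : Type) (_ : TopologicalSpace T) (F : Set T),
    IsClosedSurface T ∧ F.Finite ∧ Nonempty (S ≃ₜ {x : T // x ∉ F})

/-- A punctured surface: a closed surface with a finite positive number of points removed. -/
def IsPuncturedSurface (S : Type) [TopologicalSpace S] : Prop :=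
  ∃ (T : Type) (_ : TopologicalSpace T) (F : Set T),
    IsClosedSurface T ∧ F.Finite ∧ F.Nonempty ∧ Nonempty (S ≃ₜ {x : T // x ∉ F})

/-- The (open) disc. -/
def Disc : Type := Metric.ball (0 : ℝ × ℝ) 1

instance : TopologicalSpace Disc :=
  inferInstanceAs (TopologicalSpace (Metric.ball (0 : ℝ × ℝ) 1))

/-- The annulus `S¹ × ℝ`. -/
def Annulus : Type := Metric.sphere (0 : ℝ × ℝ) 1 × ℝ

instance : TopologicalSpace Annulus :=
  inferInstanceAs (TopologicalSpace (Metric.sphere (0 : ℝ × ℝ) 1 × ℝ))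

/-- The identification generating the Möbius band from `ℝ × ℝ`. -/
def mobiusSetoid : Setoid (ℝ × ℝ) where
  r p q := ∃ n : ℤ, q.1 = p.1 + n ∧ q.2 = (-1 : ℝ) ^ n * p.2
  iseqv := by
    constructor
    · exact fun p => ⟨0, by simp⟩
    · rintro p q ⟨n, h1, h2⟩
      refine ⟨-n, by simp [h1], ?_⟩
      rw [h2, ← mul_assoc, ← zpow_add₀ (by norm_num : (-1 : ℝ) ≠ 0)]
      simp
    · rintro p q r ⟨n, h1, h2⟩ ⟨m, h3, h4⟩
      refine ⟨n + m, by push_cast [h3, h1]; ring, ?_⟩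
      rw [h4, h2, ← mul_assoc, ← zpow_add₀ (by norm_num : (-1 : ℝ) ≠ 0)]
      ring_nf

/-- The (open) Möbius band, as the quotient of `ℝ × ℝ` by `(x, y) ∼ (x + 1, -y)`. -/
def MobiusBand : Type := Quotient mobiusSetoid

instance : TopologicalSpace MobiusBand :=
  inferInstanceAs (TopologicalSpace (Quotient mobiusSetoid))

/-- The base point of the annulus circle. -/
def circBase : Metric.sphere (0 : ℝ × ℝ) 1 :=
  ⟨(1, 0), by simp [Prod.norm_def]⟩

/-- The embedded `n`-torus in the ordered configuration space of the annulus: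
configurations whose `i`-th point lies on the `i`-th of `n` parallel disjoint core circles. -/
def TorusInConf (n : ℕ) : Type :=
  {f : ConfSpace Annulus n // ∀ i : Fin n, (f.1 i).2 = (i : ℝ)}

instance (n : ℕ) : TopologicalSpace (TorusInConf n) :=
  inferInstanceAs (TopologicalSpace {f : ConfSpace Annulus n // ∀ i : Fin n, (f.1 i).2 = (i : ℝ)})

/-- The base configuration on the `n` parallel circles. -/
def torusBase (n : ℕ) : ConfSpace Annulus n :=
  ⟨fun i => (circBase, (i : ℝ)), by
    intro i j h
    have h2 : ((i : ℕ) : ℝ) = ((j : ℕ) : ℝ) := congrArg Prod.snd h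
    exact Fin.val_injective (Nat.cast_injective h2)⟩

/-- The base point of the embedded torus. -/
def torusBasePt (n : ℕ) : TorusInConf n := ⟨torusBase n, fun _ => rfl⟩

/-- The inclusion of the embedded torus in the configuration space of the annulus. -/
def torusIncl (n : ℕ) : C(TorusInConf n, ConfSpace Annulus n) :=
  ⟨Subtype.val, continuous_subtype_val⟩

/-- The inclusion of the configuration space in the `n`-fold product. -/
def confToProd (X : Type) [TopologicalSpace X] (n : ℕ) : C(ConfSpace X n, Fin n → X) :=
  ⟨Subtype.val, continuous_subtype_val⟩

/-- The subgroup `Z_n` of the pure braid group of the annulus generated by the braids moving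
the points along `n` concentric circles; the image of the fundamental group of the embedded
torus. -/
def concentricSubgroup (n : ℕ) :
    Subgroup (FundamentalGroup (ConfSpace Annulus n) (torusBase n)) :=
  (π₁map (torusIncl n) (torusBasePt n)).range

/-- The projection of a configuration onto the pair of its `i`-th and `j`-th points. -/
def pairProj {X : Type} [TopologicalSpace X] {n : ℕ} (i j : Fin n) (hij : i ≠ j) :
    C(ConfSpace X n, ConfSpace X 2) :=
  ⟨fun f => ⟨![f.1 i, f.1 j], by
      intro a b hab
      fin_cases a <;> fin_cases b
      · rfl
      · exact absurd (f.2 hab) hij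
      · exact absurd (f.2 hab) hij.symm
      · rfl⟩, by
    apply Continuous.subtype_mk
    apply continuous_pi
    intro a
    fin_cases a <;>
      (simp; exact (continuous_apply _).comp
        (show Continuous (fun f : ConfSpace X n => f.1) from continuous_subtype_val))⟩

/-!
Translating a configuration of the plane so that its first point sits at the origin splits
`Conf(ℝ², m + 1)` as `ℝ² × Conf(ℝ² ∖ {0}, m)`: the Fadell–Neuwirth fibration that remembers only
the first point is trivial. The disc is homeomorphic to `ℝ²` and the annulus `S¹ × ℝ` to
`ℝ² ∖ {0}` (polar coordinates with logarithmic radius), and `ℝ²` is contractible, so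
`Conf(D, m + 1)` is homotopy equivalent to `Conf(A, m)`. The latter is path-connected, since the
complement of finitely many points of the plane is path-connected and the points of a
configuration can therefore be moved one at a time; hence the fundamental groups agree at any
base points.
-/

open scoped ContinuousMap

def Homeomorph.confSpaceCongr {X Y : Type} [TopologicalSpace X] [TopologicalSpace Y]
    (e : X ≃ₜ Y) (n : ℕ) : ConfSpace X n ≃ₜ ConfSpace Y n where
  toFun := confMap e e.injective n
  invFun := confMap e.symm e.symm.injective n
  left_inv _ := Subtype.ext (funext fun _ => e.symm_apply_apply _)
  right_inv _ := Subtype.ext (funext fun _ => e.apply_symm_apply _)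
  continuous_toFun := (confMap _ _ n).continuous
  continuous_invFun := (confMap _ _ n).continuous

def Disc.homeomorphPlane : Disc ≃ₜ ℝ × ℝ := Homeomorph.unitBall.symm

def Annulus.homeomorphPuncturedPlane : Annulus ≃ₜ ({0}ᶜ : Set (ℝ × ℝ)) :=
  ((Homeomorph.refl _).prodCongr Real.expOrderIso.toHomeomorph).trans
    (homeomorphUnitSphereProd (ℝ × ℝ)).symm

def ConfSpace.fadellNeuwirthHomeomorph (G : Type) [AddGroup G] [TopologicalSpace G]
    [IsTopologicalAddGroup G] (m : ℕ) :
    ConfSpace G (m + 1) ≃ₜ G × ConfSpace ({0}ᶜ : Set G) m where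
  toFun f := (f.1 0,
    ⟨fun i => ⟨-f.1 0 + f.1 i.succ, fun h => i.succ_ne_zero (f.2 (neg_add_eq_zero.mp h).symm)⟩,
      fun i j hij => Fin.succ_injective m (f.2 (add_left_cancel (congrArg Subtype.val hij)))⟩)
  invFun p := ⟨Fin.cons p.1 fun i => p.1 + (p.2.1 i).1, Fin.cons_injective_iff.mpr
    ⟨fun ⟨i, hi⟩ => (p.2.1 i).2 (left_eq_add.mp hi.symm),
      fun i j hij => p.2.2 (Subtype.ext (add_left_cancel hij))⟩⟩
  left_inv f := Subtype.ext (funext fun j => by cases j using Fin.cases <;> simp)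
  right_inv p := Prod.ext rfl (Subtype.ext (funext fun i => Subtype.ext (by simp)))
  continuous_toFun := by
    refine Continuous.prodMk ((continuous_apply 0).comp continuous_subtype_val) ?_
    refine Continuous.subtype_mk (continuous_pi fun i => Continuous.subtype_mk ?_ _) _
    exact ((continuous_apply 0).comp continuous_subtype_val).neg.add
      ((continuous_apply i.succ).comp continuous_subtype_val)
  continuous_invFun := by
    refine Continuous.subtype_mk ?_ _
    refine continuous_fst.finCons (A := fun _ => G) (continuous_pi fun i => ?_)
    exact continuous_fst.add (continuous_subtype_val.comp
      ((continuous_apply i).comp (continuous_subtype_val.comp continuous_snd)))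

theorem ContractibleSpace.prod_hequiv (C Z : Type) [TopologicalSpace C] [TopologicalSpace Z]
    [ContractibleSpace C] : Nonempty ((C × Z) ≃ₕ Z) :=
  (ContractibleSpace.hequiv_unit C).map fun e =>
    (e.prodCongr (.refl Z)).trans (Homeomorph.punitProd Z).toHomotopyEquiv

theorem nonempty_hequiv_confSpace_disc_annulus (m : ℕ) :
    Nonempty (ConfSpace Disc (m + 1) ≃ₕ ConfSpace Annulus m) :=
  (ContractibleSpace.prod_hequiv (ℝ × ℝ) _).map fun e =>
    (((Disc.homeomorphPlane.confSpaceCongr (m + 1)).trans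
      (ConfSpace.fadellNeuwirthHomeomorph (ℝ × ℝ) m)).toHomotopyEquiv.trans e).trans
      (Annulus.homeomorphPuncturedPlane.symm.confSpaceCongr m).toHomotopyEquiv

theorem Function.Injective.update_of_notMem_image {ι α : Type*} [DecidableEq ι] {f : ι → α}
    (hf : Function.Injective f) {k : ι} {y : α} (hy : y ∉ f '' {k}ᶜ) :
    Function.Injective (Function.update f k y) := by
  intro i j hij
  by_cases hi : i = k <;> by_cases hj : j = k
  · exact hi.trans hj.symm
  · subst hi
    simp only [Function.update_self, Function.update_of_ne hj] at hij
    exact absurd ⟨j, hj, hij.symm⟩ hy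
  · subst hj
    simp only [Function.update_self, Function.update_of_ne hi] at hij
    exact absurd ⟨i, hi, hij⟩ hy
  · simp only [Function.update_of_ne hi, Function.update_of_ne hj] at hij
    exact hf hij

section PathConnected

variable {X : Type} [TopologicalSpace X] {n : ℕ}

theorem ConfSpace.joined_of_eqOn_compl (hX : ∀ s : Set X, s.Finite → IsPathConnected sᶜ)
    (f g : ConfSpace X n) (k : Fin n) (hfg : ∀ i ≠ k, f.1 i = g.1 i) : Joined f g := by
  have hS : IsPathConnected (f.1 '' {k}ᶜ)ᶜ := hX _ ((Set.toFinite _).image _)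
  have hf : f.1 k ∉ f.1 '' {k}ᶜ := fun ⟨i, hi, h⟩ => hi (f.2 h)
  have hg : g.1 k ∉ f.1 '' {k}ᶜ := fun ⟨i, hi, h⟩ => hi (g.2 ((hfg i hi).symm.trans h))
  let γ := (hS.joinedIn _ hf _ hg).somePath
  have hγ (t) : γ t ∉ f.1 '' {k}ᶜ := (hS.joinedIn _ hf _ hg).somePath_mem t
  refine ⟨⟨⟨fun t => ⟨Function.update f.1 k (γ t), f.2.update_of_notMem_image (hγ t)⟩,
    (continuous_const.update k γ.continuous).subtype_mk _⟩, ?_, ?_⟩⟩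
  · exact Subtype.ext (by simp)
  · refine Subtype.ext (funext fun i => ?_)
    rcases eq_or_ne i k with rfl | hi
    · simp
    · simp [hi, hfg i hi]

theorem ConfSpace.joined_of_disjoint (hX : ∀ s : Set X, s.Finite → IsPathConnected sᶜ)
    (f h : ConfSpace X n) (hfh : Disjoint (Set.range f.1) (Set.range h.1)) : Joined f h := by
  classical
  have hinj (s : Finset (Fin n)) : Function.Injective (s.piecewise h.1 f.1) := by
    intro i j hij
    by_cases hi : i ∈ s <;> by_cases hj : j ∈ s <;>
      simp only [Finset.piecewise_eq_of_mem, Finset.piecewise_eq_of_notMem, hi, hj,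
        not_false_eq_true] at hij
    · exact h.2 hij
    · exact absurd hij.symm (hfh.ne_of_mem ⟨j, rfl⟩ ⟨i, rfl⟩)
    · exact absurd hij (hfh.ne_of_mem ⟨i, rfl⟩ ⟨j, rfl⟩)
    · exact f.2 hij
  suffices ∀ (s : Finset (Fin n)) (g : ConfSpace X n), g.1 = s.piecewise h.1 f.1 → Joined f g from
    this Finset.univ h (Finset.piecewise_univ _ _).symm
  intro s
  induction s using Finset.induction_on with
  | empty =>
    intro g hg
    obtain rfl : g = f := Subtype.ext (hg.trans (Finset.piecewise_empty _ _))
    exact Joined.refl g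
  | insert a s _ ih =>
    intro g hg
    refine (ih ⟨_, hinj s⟩ rfl).trans (joined_of_eqOn_compl hX _ _ a fun i hi => ?_)
    simp [hg, Finset.piecewise_insert, Function.update_of_ne hi]

theorem ConfSpace.exists_disjoint (hX : ∀ s : Set X, s.Finite → IsPathConnected sᶜ)
    {t : Set X} (ht : t.Finite) : ∃ h : ConfSpace X n, Disjoint (Set.range h.1) t := by
  have : Infinite X := Set.infinite_univ_iff.mp fun hfin => by
    simpa using (hX _ hfin).nonempty
  let e := ht.infinite_compl.natEmbedding
  exact ⟨⟨fun i => e i, fun i j hij => Fin.ext (e.injective (Subtype.ext hij))⟩,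
    Set.disjoint_left.mpr fun _ ⟨i, hi⟩ => hi ▸ (e i).2⟩

theorem ConfSpace.pathConnectedSpace (hX : ∀ s : Set X, s.Finite → IsPathConnected sᶜ) :
    PathConnectedSpace (ConfSpace X n) := by
  obtain ⟨c, -⟩ := exists_disjoint (n := n) hX Set.finite_empty
  refine ⟨⟨c⟩, fun f g => ?_⟩
  obtain ⟨h, hh⟩ :=
    exists_disjoint (n := n) hX ((Set.finite_range f.1).union (Set.finite_range g.1))
  have hf := Set.disjoint_union_right.mp hh
  exact (joined_of_disjoint hX f h hf.1.symm).trans (joined_of_disjoint hX g h hf.2.symm).symm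

end PathConnected

theorem isPathConnected_compl_of_finite_plane {s : Set (ℝ × ℝ)} (hs : s.Finite) :
    IsPathConnected sᶜ := by
  refine hs.countable.isPathConnected_compl_of_one_lt_rank ?_
  rw [rank_prod', Module.rank_self, one_add_one_eq_two]
  exact Cardinal.one_lt_two

instance (m : ℕ) : PathConnectedSpace (ConfSpace Annulus m) :=
  have := ConfSpace.pathConnectedSpace (n := m + 1) fun _ => isPathConnected_compl_of_finite_plane
  let e := ConfSpace.fadellNeuwirthHomeomorph (ℝ × ℝ) m
  let e' := Annulus.homeomorphPuncturedPlane.symm.confSpaceCongr m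
  (e'.surjective.comp (Prod.snd_surjective.comp e.surjective)).pathConnectedSpace
    (e'.continuous.comp (continuous_snd.comp e.continuous))

theorem ContinuousMap.HomotopyEquiv.nonempty_fundamentalGroup_mulEquiv {X Y : Type}
    [TopologicalSpace X] [TopologicalSpace Y] [PathConnectedSpace Y] (e : X ≃ₕ Y) (x : X)
    (y : Y) : Nonempty (FundamentalGroup X x ≃* FundamentalGroup Y y) := by
  let E := FundamentalGroupoidFunctor.equivOfHomotopyEquiv (X := TopCat.of X) (Y := TopCat.of Y) e
  have φ : FundamentalGroup X x ≃* FundamentalGroup Y (e x) := E.fullyFaithfulFunctor.mulEquivEnd _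
  exact ⟨φ.trans
    (FundamentalGroup.fundamentalGroupMulEquivOfPath (PathConnectedSpace.somePath _ _))⟩

/-- The pure braid group of the disc on `n` strands is isomorphic to the pure braid group of
the annulus on `n - 1` strands. -/
theorem stmt14 (n : ℕ) (hn : 1 ≤ n) (c : ConfSpace Disc n) (c' : ConfSpace Annulus (n - 1)) :
    Nonempty (FundamentalGroup (ConfSpace Disc n) c ≃*
      FundamentalGroup (ConfSpace Annulus (n - 1)) c') := by
  obtain ⟨m, rfl⟩ := Nat.exists_eq_add_of_le' hn
  obtain ⟨e⟩ := nonempty_hequiv_confSpace_disc_annulus m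
  exact e.nonempty_fundamentalGroup_mulEquiv c c'
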